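/- arXiv:2311.06885 — 5 statements merged into one kernel-verified Lean document; each statement's English description precedes it below -/
import Mathlib

section
/- There exists a constant C > 0, depending only on the mollifier Θ, such that for every κ ∈ (0, 1/2] one has ∫_{-1}^{1} | φ_κ'(z) + 1/2 | dz ≤ C κ. -/
open intervalIntegral MeasureTheory

/-- there is a constant C > 0 depending only on the mollifier Θ such
that for every κ ∈ (0,1/2] one has ∫_{-1}^{1} |φ_κ'(z) + 1/2| dz ≤ C κ. -/
theorem stmt_2 (Θ : ℝ → ℝ)
    (hΘsmooth : ContDiff ℝ (⊤ : ℕ∞) Θ)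
    (hΘzero : ∀ x : ℝ, 1 ≤ |x| → Θ x = 0)
    (hΘpos : ∀ x : ℝ, |x| < 1 → 0 < Θ x)
    (hΘint : (∫ x in (-1:ℝ)..1, Θ x) = 1) :
    ∃ C : ℝ, 0 < C ∧ ∀ κ : ℝ, κ ∈ Set.Ioc (0:ℝ) (1/2) →
      ∀ N φ : ℝ → ℝ,
        (∀ z : ℝ, N z = ∫ y in (-1:ℝ)..z, ∫ t in (-1+κ)..(1-κ), Θ ((y - t)/κ)) →
        (∀ z : ℝ, φ z = 1 - N z / N 1) →
        (∫ z in (-1:ℝ)..1, |deriv φ z + 1/2|) ≤ C * κ := by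
  have hΘc : Continuous Θ := hΘsmooth.continuous
  have hΘnn : ∀ x, 0 ≤ Θ x := by
    intro x
    rcases lt_or_ge |x| 1 with h | h
    · exact (hΘpos x h).le
    · exact (hΘzero x h).ge
  have hΘi : ∀ a b : ℝ, IntervalIntegrable Θ volume a b :=
    fun a b => hΘc.intervalIntegrable a b
  set G : ℝ → ℝ := fun x => ∫ u in (-1:ℝ)..x, Θ u with hGdef
  have hGc : Continuous G := intervalIntegral.continuous_primitive hΘi (-1)
  -- G vanishes left of -1
  have hG0 : ∀ x : ℝ, x ≤ -1 → G x = 0 := by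
    intro x hx
    have : ∀ u ∈ Set.uIcc (-1:ℝ) x, Θ u = (0:ℝ) := by
      intro u hu
      rw [Set.uIcc_of_ge hx] at hu
      exact hΘzero u (by rw [abs_of_nonpos (by linarith [hu.2])]; linarith [hu.2])
    simpa using intervalIntegral.integral_congr this
  -- G equals 1 right of 1
  have hG1 : ∀ x : ℝ, 1 ≤ x → G x = 1 := by
    intro x hx
    have hz : (∫ u in (1:ℝ)..x, Θ u) = 0 := by
      have : ∀ u ∈ Set.uIcc (1:ℝ) x, Θ u = (0:ℝ) := by
        intro u hu
        rw [Set.uIcc_of_le hx] at hu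
        exact hΘzero u (by rw [abs_of_nonneg (by linarith [hu.1])]; exact hu.1)
      simpa using intervalIntegral.integral_congr this
    have := intervalIntegral.integral_add_adjacent_intervals (hΘi (-1) 1) (hΘi 1 x)
    show (∫ u in (-1:ℝ)..x, Θ u) = 1
    rw [← this, hΘint, hz, add_zero]
  have hGmono : Monotone G := by
    intro x y hxy
    have h := intervalIntegral.integral_interval_sub_left (hΘi (-1) y) (hΘi (-1) x)
    have hpos : 0 ≤ ∫ u in x..y, Θ u :=
      intervalIntegral.integral_nonneg hxy (fun u _ => hΘnn u)
    have : G y - G x = ∫ u in x..y, Θ u := h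
    linarith
  have hGnn : ∀ x, 0 ≤ G x := by
    intro x
    rcases le_or_gt x (-1) with h | h
    · rw [hG0 x h]
    · have := hGmono (le_of_lt (show (-1:ℝ) < x from h)) |>.trans_eq rfl
      calc (0:ℝ) = G (-1) := (hG0 (-1) le_rfl).symm
        _ ≤ G x := hGmono h.le
  have hGle : ∀ x, G x ≤ 1 := by
    intro x
    rcases le_or_gt x 1 with h | h
    · calc G x ≤ G 1 := hGmono h
        _ = 1 := hG1 1 le_rfl
    · rw [hG1 x h.le]
  refine ⟨8, by norm_num, ?_⟩
  rintro κ ⟨hκ0, hκ2⟩ N φ hN hφ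
  have hκne : κ ≠ 0 := ne_of_gt hκ0
  -- the inner integral in closed form
  set g : ℝ → ℝ := fun z => κ * (G ((z-(-1+κ))/κ) - G ((z-(1-κ))/κ)) with hgdef
  have hsub : ∀ z : ℝ, (∫ t in (-1+κ)..(1-κ), Θ ((z - t)/κ)) = g z := by
    intro z
    have h1 : (∫ t in (-1+κ)..(1-κ), Θ ((z - t)/κ))
        = ∫ s in (z-(1-κ))..(z-(-1+κ)), Θ (s/κ) :=
      intervalIntegral.integral_comp_sub_left (fun s => Θ (s/κ)) z
    rw [h1, intervalIntegral.integral_comp_div _ hκne, smul_eq_mul, hgdef]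
    congr 1
    rw [intervalIntegral.integral_interval_sub_left (hΘi (-1) _) (hΘi (-1) _)]
  have hgc : Continuous g := by
    have c1 : Continuous fun z : ℝ => (z-(-1+κ))/κ :=
      (continuous_id.sub continuous_const).div_const κ
    have c2 : Continuous fun z : ℝ => (z-(1-κ))/κ :=
      (continuous_id.sub continuous_const).div_const κ
    exact continuous_const.mul ((hGc.comp c1).sub (hGc.comp c2))
  have hgi : ∀ a b : ℝ, IntervalIntegrable g volume a b :=
    fun a b => hgc.intervalIntegrable a b
  have hNfun : N = fun z => ∫ y in (-1:ℝ)..z, g y := by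
    funext z
    rw [hN z]
    exact intervalIntegral.integral_congr (fun y _ => hsub y)
  -- bounds on g
  have hg_nonneg : ∀ z, 0 ≤ g z := by
    intro z
    apply mul_nonneg hκ0.le
    rw [sub_nonneg]
    exact hGmono ((div_le_div_iff_of_pos_right hκ0).mpr (by linarith))
  have hg_le : ∀ z, g z ≤ κ := by
    intro z
    have := hGle ((z-(-1+κ))/κ)
    have := hGnn ((z-(1-κ))/κ)
    calc g z ≤ κ * 1 := by
          apply mul_le_mul_of_nonneg_left ?_ hκ0.le
          linarith
      _ = κ := mul_one κ
  have hg_eq : ∀ z : ℝ, -1 + 2*κ ≤ z → z ≤ 1 - 2*κ → g z = κ := by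
    intro z h1 h2
    have e1 : G ((z-(-1+κ))/κ) = 1 := hG1 _ (by rw [le_div_iff₀ hκ0]; linarith)
    have e2 : G ((z-(1-κ))/κ) = 0 := hG0 _ (by rw [div_le_iff₀ hκ0]; linarith)
    simp only [hgdef]
    rw [e1, e2]; ring
  -- compute N 1 = 2κ(1-κ)
  have hN1 : N 1 = 2*κ*(1-κ) := by
    rw [hNfun]
    simp only [hgdef]
    rw [intervalIntegral.integral_const_mul]
    have hi1 : IntervalIntegrable (fun y => G ((y-(-1+κ))/κ)) volume (-1) 1 :=
      ((hGc.comp ((continuous_id.sub continuous_const).div_const κ)).intervalIntegrable _ _)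
    have hi2 : IntervalIntegrable (fun y => G ((y-(1-κ))/κ)) volume (-1) 1 :=
      ((hGc.comp ((continuous_id.sub continuous_const).div_const κ)).intervalIntegrable _ _)
    rw [intervalIntegral.integral_sub hi1 hi2]
    obtain ⟨M, hκM, hM3⟩ : ∃ M : ℝ, κ * M = 2 - κ ∧ 3 ≤ M := by
      refine ⟨(2-κ)/κ, by field_simp, ?_⟩
      rw [le_div_iff₀ hκ0]; linarith
    have b1 : (-1 + (1-κ))/κ = -1 := by field_simp; ring
    have b2 : (1 + (1-κ))/κ = M := by
      rw [div_eq_iff hκne]; linear_combination -hκM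
    have b3 : (-1 + (-1+κ))/κ = -M := by
      rw [div_eq_iff hκne]; linear_combination hκM
    have b4 : (1 + (-1+κ))/κ = 1 := by field_simp; ring
    have e1 : (∫ y in (-1:ℝ)..1, G ((y-(-1+κ))/κ)) = κ * ∫ u in (-1:ℝ)..M, G u := by
      have h1 : (∫ y in (-1:ℝ)..1, G ((y-(-1+κ))/κ))
          = ∫ y in (-1:ℝ)..1, (fun s => G (s/κ)) (y + (1-κ)) := by
        apply intervalIntegral.integral_congr
        intro y _
        simp only []
        ring_nf
      rw [h1, intervalIntegral.integral_comp_add_right (fun s => G (s/κ)) (1-κ),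
        intervalIntegral.integral_comp_div _ hκne, smul_eq_mul, b1, b2]
    have e2 : (∫ y in (-1:ℝ)..1, G ((y-(1-κ))/κ)) = κ * ∫ u in (-M)..(1:ℝ), G u := by
      have h1 : (∫ y in (-1:ℝ)..1, G ((y-(1-κ))/κ))
          = ∫ y in (-1:ℝ)..1, (fun s => G (s/κ)) (y + (-1+κ)) := by
        apply intervalIntegral.integral_congr
        intro y _
        simp only []
        ring_nf
      rw [h1, intervalIntegral.integral_comp_add_right (fun s => G (s/κ)) (-1+κ),
        intervalIntegral.integral_comp_div _ hκne, smul_eq_mul, b3, b4]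
    have hGi : ∀ a b : ℝ, IntervalIntegrable G volume a b :=
      fun a b => hGc.intervalIntegrable a b
    have s1 : (∫ u in (-1:ℝ)..M, G u)
        = (∫ u in (-1:ℝ)..1, G u) + ∫ u in (1:ℝ)..M, G u :=
      (intervalIntegral.integral_add_adjacent_intervals (hGi (-1) 1) (hGi 1 M)).symm
    have s2 : (∫ u in (-M)..(1:ℝ), G u)
        = (∫ u in (-M:ℝ)..(-1), G u) + ∫ u in (-1:ℝ)..1, G u :=
      (intervalIntegral.integral_add_adjacent_intervals (hGi (-M) (-1)) (hGi (-1) 1)).symm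
    have t1 : (∫ u in (1:ℝ)..M, G u) = M - 1 := by
      have e : ∀ u ∈ Set.uIcc (1:ℝ) M, G u = (1:ℝ) := by
        intro u hu
        rw [Set.uIcc_of_le (by linarith)] at hu
        exact hG1 u hu.1
      rw [intervalIntegral.integral_congr e]
      simp
    have t2 : (∫ u in (-M:ℝ)..(-1), G u) = 0 := by
      have e : ∀ u ∈ Set.uIcc (-M:ℝ) (-1), G u = (0:ℝ) := by
        intro u hu
        rw [Set.uIcc_of_le (by linarith)] at hu
        exact hG0 u hu.2
      rw [intervalIntegral.integral_congr e]
      simp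
    rw [e1, e2, s1, s2, t1, t2]
    linear_combination κ * hκM
  have hc0 : (0:ℝ) < 2*κ*(1-κ) := by nlinarith
  -- derivative of φ
  have hφderiv : ∀ z, deriv φ z = -(g z / (2*κ*(1-κ))) := by
    intro z
    have hd : HasDerivAt (fun u => ∫ y in (-1:ℝ)..u, g y) (g z) z :=
      (hgc.integral_hasStrictDerivAt (-1) z).hasDerivAt
    have hdN : HasDerivAt N (g z) z := by rw [hNfun]; exact hd
    have hdφ : HasDerivAt (fun u => 1 - N u / N 1) (-(g z / N 1)) z :=
      (hdN.div_const (N 1)).const_sub 1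
    have : φ = fun u => 1 - N u / N 1 := funext hφ
    rw [this, hdφ.deriv, hN1]
  -- the integrand
  set h : ℝ → ℝ := fun z => |(-(g z / (2*κ*(1-κ)))) + 1/2| with hhdef
  have hint : (∫ z in (-1:ℝ)..1, |deriv φ z + 1/2|) = ∫ z in (-1:ℝ)..1, h z :=
    intervalIntegral.integral_congr (fun z _ => by rw [hφderiv z])
  have hhc : Continuous h := by
    apply Continuous.abs
    apply Continuous.add ?_ continuous_const
    exact ((hgc.div_const _).neg)
  have hhi : ∀ a b : ℝ, IntervalIntegrable h volume a b :=
    fun a b => hhc.intervalIntegrable a b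
  -- uniform bound h ≤ 1
  have hb1 : ∀ z, h z ≤ 1 := by
    intro z
    have h1 : g z / (2*κ*(1-κ)) ≤ 1 := by
      rw [div_le_one hc0]
      calc g z ≤ κ := hg_le z
        _ ≤ 2*κ*(1-κ) := by nlinarith
    have h2 : 0 ≤ g z / (2*κ*(1-κ)) := div_nonneg (hg_nonneg z) hc0.le
    simp only [hhdef]
    rw [abs_le]
    constructor <;> linarith
  -- middle bound h ≤ κ on [-1+2κ, 1-2κ]
  have hbmid : ∀ z : ℝ, -1 + 2*κ ≤ z → z ≤ 1 - 2*κ → h z ≤ κ := by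
    intro z h1 h2
    have hpos : (0:ℝ) < 2*(1-κ) := by linarith
    simp only [hhdef]
    rw [hg_eq z h1 h2]
    have he : κ / (2*κ*(1-κ)) = 1/(2*(1-κ)) := by
      rw [div_eq_div_iff hc0.ne' hpos.ne']; ring
    rw [he, abs_le]
    have key : 1/(2*(1-κ)) ≤ 1/2 + κ := by
      rw [div_le_iff₀ hpos]; nlinarith
    have key2 : (1:ℝ)/2 ≤ 1/(2*(1-κ)) := by
      rw [le_div_iff₀ hpos]; nlinarith
    constructor <;> linarith
  -- split and bound
  have hord1 : (-1:ℝ) ≤ -1 + 2*κ := by linarith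
  have hord2 : (-1:ℝ) + 2*κ ≤ 1 - 2*κ := by linarith
  have hord3 : (1:ℝ) - 2*κ ≤ 1 := by linarith
  have hsplit : (∫ z in (-1:ℝ)..1, h z)
      = (∫ z in (-1:ℝ)..(-1+2*κ), h z) + (∫ z in (-1+2*κ)..(1-2*κ), h z)
        + ∫ z in (1-2*κ)..(1:ℝ), h z := by
    rw [intervalIntegral.integral_add_adjacent_intervals (hhi _ _) (hhi _ _),
      intervalIntegral.integral_add_adjacent_intervals (hhi _ _) (hhi _ _)]
  have bd : ∀ a b B : ℝ, a ≤ b → 0 ≤ B → (∀ z, z ∈ Set.uIoc a b → h z ≤ B) →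
      (∫ z in a..b, h z) ≤ B * (b - a) := by
    intro a b B hab hB hbd
    have := intervalIntegral.norm_integral_le_of_norm_le_const
      (f := h) (a := a) (b := b) (C := B) (fun z hz => by
        rw [Real.norm_eq_abs, abs_of_nonneg (abs_nonneg _)]
        exact hbd z hz)
    calc (∫ z in a..b, h z) ≤ ‖∫ z in a..b, h z‖ := le_abs_self _
      _ ≤ B * |b - a| := this
      _ = B * (b - a) := by rw [abs_of_nonneg (by linarith)]
  have i1 : (∫ z in (-1:ℝ)..(-1+2*κ), h z) ≤ 1 * (2*κ) := by
    have := bd (-1) (-1+2*κ) 1 hord1 zero_le_one (fun z _ => hb1 z)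
    linarith [this]
  have i3 : (∫ z in (1-2*κ)..(1:ℝ), h z) ≤ 1 * (2*κ) := by
    have := bd (1-2*κ) 1 1 hord3 zero_le_one (fun z _ => hb1 z)
    linarith [this]
  have i2 : (∫ z in (-1+2*κ)..(1-2*κ), h z) ≤ κ * 2 := by
    have := bd (-1+2*κ) (1-2*κ) κ hord2 hκ0.le (fun z hz => by
      rw [Set.uIoc_of_le hord2] at hz
      exact hbmid z hz.1.le hz.2)
    nlinarith [this]
  rw [hint, hsplit]
  linarith
end

section
/- For every κ ∈ (0, 1/4] the second derivative of the regularized profile satisfies ∫_{-1}^{1} | φ_κ''(z) |² dz ≤ 8 ‖Θ‖_∞² / κ, where ‖Θ‖_∞ = sup_{x ∈ ℝ} |Θ(x)|. -/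
/-- for κ ∈ (0,1/4], the second derivative of the κ-regularized profile
satisfies ∫_{-1}^{1} |φ_κ''(z)|² dz ≤ 8 ‖Θ‖_∞² / κ, where ‖Θ‖_∞ = sup_x |Θ(x)|. -/
theorem stmt_4 (Θ : ℝ → ℝ)
    (hΘsmooth : ContDiff ℝ (⊤ : ℕ∞) Θ)
    (hΘzero : ∀ x : ℝ, 1 ≤ |x| → Θ x = 0)
    (hΘpos : ∀ x : ℝ, |x| < 1 → 0 < Θ x)
    (hΘint : (∫ x in (-1:ℝ)..1, Θ x) = 1)
    (κ : ℝ) (hκ : κ ∈ Set.Ioc (0:ℝ) (1/4))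
    (N φ : ℝ → ℝ)
    (hN : ∀ z : ℝ, N z = ∫ y in (-1:ℝ)..z, ∫ t in (-1+κ)..(1-κ), Θ ((y - t)/κ))
    (hφ : ∀ z : ℝ, φ z = 1 - N z / N 1) :
    (∫ z in (-1:ℝ)..1, |deriv (deriv φ) z|^2) ≤ 8 * (⨆ x : ℝ, |Θ x|)^2 / κ := by
  obtain ⟨hκ0, hκ4⟩ := hκ
  have hκne : κ ≠ 0 := ne_of_gt hκ0
  have hΘc : Continuous Θ := hΘsmooth.continuous
  -- nonnegativity of Θ
  have hΘnn : ∀ x, 0 ≤ Θ x := by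
    intro x
    rcases lt_or_ge |x| 1 with h | h
    · exact (hΘpos x h).le
    · rw [hΘzero x h]
  -- bound M on |Θ|
  set M : ℝ := ⨆ x : ℝ, |Θ x| with hMdef
  have hbdd : BddAbove (Set.range fun x : ℝ => |Θ x|) := by
    obtain ⟨c, hc, hcmax⟩ := (isCompact_Icc (a := (-1:ℝ)) (b := 1)).exists_isMaxOn
      (Set.nonempty_Icc.2 (by norm_num)) (hΘc.abs.continuousOn)
    refine ⟨|Θ c|, ?_⟩
    rintro y ⟨x, rfl⟩
    rcases le_or_gt |x| 1 with h | h
    · exact hcmax (Set.mem_Icc.2 (abs_le.1 h))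
    · show |Θ x| ≤ |Θ c|
      rw [hΘzero x h.le]; simp [abs_nonneg]
  have hM : ∀ x, |Θ x| ≤ M := fun x => le_ciSup hbdd x
  have hM0 : 0 ≤ M := (abs_nonneg (Θ 0)).trans (hM 0)
  -- antiderivative F
  set F : ℝ → ℝ := fun x => ∫ t in (0:ℝ)..x, Θ t with hFdef
  have hF : ∀ x, HasDerivAt F (Θ x) x :=
    fun x => (hΘc.integral_hasStrictDerivAt 0 x).hasDerivAt
  have hFc : Continuous F := by
    rw [continuous_iff_continuousAt]; exact fun x => (hF x).continuousAt
  have hFint : ∀ a b : ℝ, (∫ t in a..b, Θ t) = F b - F a := by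
    intro a b
    have h := intervalIntegral.integral_add_adjacent_intervals
      (hΘc.intervalIntegrable 0 a) (hΘc.intervalIntegrable a b) (μ := MeasureTheory.volume)
    simp only [hFdef]
    linarith
  -- the function G = N'
  set G : ℝ → ℝ := fun z => κ * (F ((z + 1 - κ)/κ) - F ((z - 1 + κ)/κ)) with hGdef
  have hGeq : ∀ z : ℝ, (∫ t in (-1+κ)..(1-κ), Θ ((z - t)/κ)) = G z := by
    intro z
    have h1 : (∫ t in (-1+κ)..(1-κ), Θ ((z - t)/κ))
        = ∫ s in z - (1-κ)..z - (-1+κ), Θ (s/κ) :=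
      intervalIntegral.integral_comp_sub_left (fun s => Θ (s/κ)) z
    rw [h1, intervalIntegral.integral_comp_div (f := Θ) hκne,
      hFint, smul_eq_mul, hGdef]
    ring_nf
  -- G is continuous and differentiable
  have hGcont : Continuous G := by
    apply continuous_const.mul
    exact (hFc.comp ((continuous_id.add continuous_const).sub continuous_const |>.div_const κ)).sub
      (hFc.comp ((continuous_id.sub continuous_const).add continuous_const |>.div_const κ))
  have hGderiv : ∀ z : ℝ, HasDerivAt G (Θ ((z + 1 - κ)/κ) - Θ ((z - 1 + κ)/κ)) z := by
    intro z
    have hin1 : HasDerivAt (fun z : ℝ => (z + 1 - κ)/κ) (1/κ) z := by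
      simpa using (((hasDerivAt_id z).add_const 1).sub_const κ).div_const κ
    have hin2 : HasDerivAt (fun z : ℝ => (z - 1 + κ)/κ) (1/κ) z := by
      simpa using (((hasDerivAt_id z).sub_const 1).add_const κ).div_const κ
    have h1 : HasDerivAt (fun z : ℝ => F ((z + 1 - κ)/κ)) (Θ ((z + 1 - κ)/κ) * (1/κ)) z :=
      (hF _).comp z hin1
    have h2 : HasDerivAt (fun z : ℝ => F ((z - 1 + κ)/κ)) (Θ ((z - 1 + κ)/κ) * (1/κ)) z :=
      (hF _).comp z hin2
    have h3 := ((h1.sub h2).const_mul κ)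
    have heq : κ * (Θ ((z + 1 - κ)/κ) * (1/κ) - Θ ((z - 1 + κ)/κ) * (1/κ))
        = Θ ((z + 1 - κ)/κ) - Θ ((z - 1 + κ)/κ) := by field_simp
    rw [heq] at h3
    exact h3
  -- N as integral of G
  have hNG : N = fun z => ∫ y in (-1:ℝ)..z, G y := by
    funext z
    rw [hN z]
    exact intervalIntegral.integral_congr fun y _ => hGeq y
  have hNder : ∀ z : ℝ, HasDerivAt N (G z) z := by
    intro z
    rw [hNG]
    exact (hGcont.integral_hasStrictDerivAt (-1) z).hasDerivAt
  -- G is nonnegative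
  have hGnn : ∀ y : ℝ, 0 ≤ G y := by
    intro y
    rw [← hGeq y]
    apply intervalIntegral.integral_nonneg (by linarith)
    intro t _
    exact hΘnn _
  -- G = κ in the middle
  have hint0 : ∀ a b : ℝ, a ≤ b → (b ≤ -1 ∨ 1 ≤ a) → (∫ t in a..b, Θ t) = 0 := by
    intro a b hle hab
    rw [show (0:ℝ) = ∫ t in a..b, (0:ℝ) by simp]
    apply intervalIntegral.integral_congr
    intro x hx
    rw [Set.uIcc_of_le hle] at hx
    rcases hab with h | h
    · have hx1 : x ≤ -1 := le_trans hx.2 h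
      exact hΘzero x (by rw [abs_of_nonpos (by linarith)]; linarith)
    · have hx1 : (1:ℝ) ≤ x := le_trans h hx.1
      exact hΘzero x (by rw [abs_of_nonneg (by linarith)]; linarith)
  have hGmid : ∀ y : ℝ, -1 + 2*κ ≤ y → y ≤ 1 - 2*κ → G y = κ := by
    intro y h1 h2
    have hu2 : (y - 1 + κ)/κ ≤ -1 := by
      rw [div_le_iff₀ hκ0]; linarith
    have hu1 : (1:ℝ) ≤ (y + 1 - κ)/κ := by
      rw [le_div_iff₀ hκ0]; linarith
    have hsum : F ((y + 1 - κ)/κ) - F ((y - 1 + κ)/κ) = 1 := by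
      have e1 : (∫ t in ((y - 1 + κ)/κ)..(-1:ℝ), Θ t) = 0 := hint0 _ _ hu2 (Or.inl le_rfl)
      have e2 : (∫ t in (1:ℝ)..((y + 1 - κ)/κ), Θ t) = 0 := hint0 _ _ hu1 (Or.inr le_rfl)
      have := hFint ((y - 1 + κ)/κ) (-1)
      have := hFint (-1:ℝ) 1
      have := hFint (1:ℝ) ((y + 1 - κ)/κ)
      rw [e1] at *
      linarith [hΘint, hFint ((y - 1 + κ)/κ) (-1), hFint (-1:ℝ) (1:ℝ),
        hFint (1:ℝ) ((y + 1 - κ)/κ), e1, e2]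
    rw [hGdef]
    simp only
    rw [hsum, mul_one]
  -- N 1 ≥ κ
  have hN1 : κ ≤ N 1 := by
    have hsplit1 := intervalIntegral.integral_add_adjacent_intervals
      (hGcont.intervalIntegrable (-1) (-1 + 2*κ)) (hGcont.intervalIntegrable (-1 + 2*κ) 1)
      (μ := MeasureTheory.volume)
    have hsplit2 := intervalIntegral.integral_add_adjacent_intervals
      (hGcont.intervalIntegrable (-1 + 2*κ) (1 - 2*κ)) (hGcont.intervalIntegrable (1 - 2*κ) 1)
      (μ := MeasureTheory.volume)
    have hp1 : 0 ≤ ∫ y in (-1:ℝ)..(-1 + 2*κ), G y :=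
      intervalIntegral.integral_nonneg (by linarith) fun y _ => hGnn y
    have hp3 : 0 ≤ ∫ y in (1 - 2*κ:ℝ)..1, G y :=
      intervalIntegral.integral_nonneg (by linarith) fun y _ => hGnn y
    have hp2 : (∫ y in (-1 + 2*κ:ℝ)..(1 - 2*κ), G y) = κ * (2 - 4*κ) := by
      rw [intervalIntegral.integral_congr (g := fun _ => κ) ?_, intervalIntegral.integral_const,
        smul_eq_mul]
      · ring
      · intro y hy
        rw [Set.uIcc_of_le (by linarith)] at hy
        exact hGmid y hy.1 hy.2
    have hNval : N 1 = ∫ y in (-1:ℝ)..1, G y := by rw [hNG]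
    nlinarith
  have hN1pos : 0 < N 1 := lt_of_lt_of_le hκ0 hN1
  -- second derivative of φ
  set D : ℝ → ℝ := fun z => Θ ((z + 1 - κ)/κ) - Θ ((z - 1 + κ)/κ) with hDdef
  have hDcont : Continuous D := by
    apply Continuous.sub
    · exact hΘc.comp ((continuous_id.add continuous_const).sub continuous_const |>.div_const κ)
    · exact hΘc.comp ((continuous_id.sub continuous_const).add continuous_const |>.div_const κ)
  have hφd : ∀ z : ℝ, HasDerivAt φ (-(G z / N 1)) z := by
    intro z
    have hφfun : φ = fun z => 1 - N z / N 1 := funext hφ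
    rw [hφfun]
    have := ((hNder z).div_const (N 1)).const_sub 1
    simpa using this
  have hφ'eq : deriv φ = fun z => -(G z / N 1) := funext fun z => (hφd z).deriv
  have hφ'' : ∀ z : ℝ, deriv (deriv φ) z = -(D z / N 1) := by
    intro z
    rw [hφ'eq]
    exact (((hGderiv z).div_const (N 1)).neg).deriv
  -- vanishing of the two bump terms
  have haux1 : ∀ z : ℝ, -1 + 2*κ ≤ z → Θ ((z + 1 - κ)/κ) = 0 := by
    intro z hz
    apply hΘzero
    have h : (1:ℝ) ≤ (z + 1 - κ)/κ := by rw [le_div_iff₀ hκ0]; linarith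
    exact le_trans h (le_abs_self _)
  have haux2 : ∀ z : ℝ, z ≤ 1 - 2*κ → Θ ((z - 1 + κ)/κ) = 0 := by
    intro z hz
    apply hΘzero
    have h : (z - 1 + κ)/κ ≤ -1 := by rw [div_le_iff₀ hκ0]; linarith
    calc (1:ℝ) ≤ -((z - 1 + κ)/κ) := by linarith
      _ ≤ |(z - 1 + κ)/κ| := neg_le_abs _
  -- the integrand
  have hInteq : (∫ z in (-1:ℝ)..1, |deriv (deriv φ) z|^2)
      = ∫ z in (-1:ℝ)..1, (D z / N 1)^2 := by
    apply intervalIntegral.integral_congr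
    intro z _
    show |deriv (deriv φ) z|^2 = (D z / N 1)^2
    rw [hφ'' z, abs_neg, sq_abs]
  rw [hInteq]
  -- split the integral
  have hDI : ∀ a b : ℝ, IntervalIntegrable (fun z => (D z / N 1)^2) MeasureTheory.volume a b :=
    fun a b => ((hDcont.div_const (N 1)).pow 2).intervalIntegrable a b
  have hsplit1 := intervalIntegral.integral_add_adjacent_intervals
    (hDI (-1) (-1 + 2*κ)) (hDI (-1 + 2*κ) 1)
  have hsplit2 := intervalIntegral.integral_add_adjacent_intervals
    (hDI (-1 + 2*κ) (1 - 2*κ)) (hDI (1 - 2*κ) 1)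
  -- pointwise bound
  have hDb : ∀ z : ℝ, |D z| ≤ M → (D z / N 1)^2 ≤ (M/κ)^2 := by
    intro z hz
    have h1 : |D z / N 1| ≤ M / κ := by
      rw [abs_div]
      apply div_le_div₀ hM0 ?_ hκ0 ?_
      · exact hz
      · rw [abs_of_pos hN1pos]; exact hN1
    calc (D z / N 1)^2 = |D z / N 1|^2 := (sq_abs _).symm
      _ ≤ (M/κ)^2 := pow_le_pow_left₀ (abs_nonneg _) h1 2
  -- middle piece is zero
  have hmid : (∫ z in (-1 + 2*κ:ℝ)..(1 - 2*κ), (D z / N 1)^2) = 0 := by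
    rw [show (0:ℝ) = ∫ z in (-1 + 2*κ:ℝ)..(1 - 2*κ), (0:ℝ) by simp]
    apply intervalIntegral.integral_congr
    intro z hz
    rw [Set.uIcc_of_le (by linarith)] at hz
    show (D z / N 1)^2 = 0
    have hDz : D z = 0 := by
      rw [hDdef]; simp only
      rw [haux1 z hz.1, haux2 z hz.2, sub_zero]
    rw [hDz]
    simp
  -- side pieces
  have hside1 : (∫ z in (-1:ℝ)..(-1 + 2*κ), (D z / N 1)^2) ≤ 2*κ * (M/κ)^2 := by
    calc (∫ z in (-1:ℝ)..(-1 + 2*κ), (D z / N 1)^2)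
        ≤ ∫ _ in (-1:ℝ)..(-1 + 2*κ), (M/κ)^2 := by
          apply intervalIntegral.integral_mono_on (by linarith) (hDI _ _)
            intervalIntegrable_const
          intro z hz
          apply hDb
          have h2 : Θ ((z - 1 + κ)/κ) = 0 := haux2 z (by linarith [hz.2])
          rw [hDdef]; simp only
          rw [h2, sub_zero]
          exact hM _
      _ = 2*κ * (M/κ)^2 := by rw [intervalIntegral.integral_const, smul_eq_mul]; ring
  have hside2 : (∫ z in (1 - 2*κ:ℝ)..1, (D z / N 1)^2) ≤ 2*κ * (M/κ)^2 := by
    calc (∫ z in (1 - 2*κ:ℝ)..1, (D z / N 1)^2)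
        ≤ ∫ _ in (1 - 2*κ:ℝ)..1, (M/κ)^2 := by
          apply intervalIntegral.integral_mono_on (by linarith) (hDI _ _)
            intervalIntegrable_const
          intro z hz
          apply hDb
          have h1 : Θ ((z + 1 - κ)/κ) = 0 := haux1 z (by linarith [hz.1])
          rw [hDdef]; simp only
          rw [h1, zero_sub, abs_neg]
          exact hM _
      _ = 2*κ * (M/κ)^2 := by rw [intervalIntegral.integral_const, smul_eq_mul]; ring
  -- conclude
  calc (∫ z in (-1:ℝ)..1, (D z / N 1)^2) ≤ 4*κ * (M/κ)^2 := by linarith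
    _ = 4 * M^2 / κ := by field_simp
    _ ≤ 8 * M^2 / κ := by gcongr; nlinarith [sq_nonneg M]
    _ = 8 * (⨆ x : ℝ, |Θ x|)^2 / κ := by rw [hMdef]
end

section
/- Let 0 < r₁ < r₂, let ϖ : [r₁, r₂] → ℝ be continuous and let γ ∈ ℝ. Set C = ( γ + ∫_{r₁}^{r₂} (1/s) ( ∫_{r₁}^{s} t·ϖ(t) dt ) ds ) / log(r₂/r₁), and define φ(r) = C·log(r/r₁) − ∫_{r₁}^{r} (1/s) ( ∫_{r₁}^{s} t·ϖ(t) dt ) ds for r ∈ [r₁, r₂]. Then φ(r₁) = 0, φ(r₂) = γ, φ is twice differentiable on (r₁, r₂), and for every r ∈ (r₁, r₂) one has −( φ''(r) + φ'(r)/r ) = ϖ(r). -/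
/-!
With `g r = ∫_{r₁}^r t ϖ(t) dt`, the function `φ` satisfies `r φ'(r) = C - g(r)`, so
`r φ'' + φ' = (r φ')' = -g'(r) = -r ϖ(r)`, which is the equation after dividing by `r`.
The constant `C` is chosen so that the logarithmic term corrects the boundary value at `r₂`.
-/

open MeasureTheory Set Filter Topology

theorem hasDerivAt_integral_of_continuousOn_Icc {f : ℝ → ℝ} {a b x : ℝ}
    (hf : ContinuousOn f (Icc a b)) (hx : x ∈ Ioo a b) :
    HasDerivAt (fun y => ∫ t in a..y, f t) (f x) x :=
  intervalIntegral.integral_hasDerivAt_right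
    ((hf.mono (Icc_subset_Icc le_rfl hx.2.le)).intervalIntegrable_of_Icc hx.1.le)
    ((hf.mono Ioo_subset_Icc_self).stronglyMeasurableAtFilter isOpen_Ioo x hx)
    ((hf.mono Ioo_subset_Icc_self).continuousAt (isOpen_Ioo.mem_nhds hx))

theorem continuousOn_integral_Icc {f : ℝ → ℝ} {a b : ℝ} (hab : a ≤ b)
    (hf : ContinuousOn f (Icc a b)) :
    ContinuousOn (fun y => ∫ t in a..y, f t) (Icc a b) := by
  rw [← uIcc_of_le hab] at hf ⊢
  exact intervalIntegral.continuousOn_primitive_interval hf.integrableOn_uIcc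

theorem hasDerivAt_mul_log_sub_integral_inv_mul {g : ℝ → ℝ} {a b C x : ℝ} (ha : 0 < a)
    (hg : ContinuousOn g (Icc a b)) (hx : x ∈ Ioo a b) :
    HasDerivAt (fun r => C * Real.log (r / a) - ∫ s in a..r, (1 / s) * g s)
      ((C - g x) / x) x := by
  have hx₀ : 0 < x := ha.trans hx.1
  have hlog : HasDerivAt (fun r => C * Real.log (r / a)) (C / x) x :=
    ((((hasDerivAt_id' x).div_const a).log (by positivity)).const_mul C).congr_deriv
      (by field_simp)
  have hinv_mul : ContinuousOn (fun s => (1 / s) * g s) (Icc a b) :=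
    (continuousOn_const.div continuousOn_id fun s hs => (ha.trans_le hs.1).ne').mul hg
  exact (hlog.sub (hasDerivAt_integral_of_continuousOn_Icc hinv_mul hx)).congr_deriv
    (by field_simp)

theorem neg_deriv_deriv_add_deriv_div_eq {φ g : ℝ → ℝ} {C x w : ℝ} (hx : x ≠ 0)
    (hφ : ∀ᶠ y in 𝓝 x, HasDerivAt φ ((C - g y) / y) y) (hg : HasDerivAt g (x * w) x) :
    DifferentiableAt ℝ (deriv φ) x ∧ -(deriv (deriv φ) x + deriv φ x / x) = w := by
  have hderiv : deriv φ =ᶠ[𝓝 x] fun y => (C - g y) / y := hφ.mono fun y hy => hy.deriv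
  have hderiv₂ : HasDerivAt (fun y => (C - g y) / y)
      (((0 - x * w) * x - (C - g x) * 1) / x ^ 2) x :=
    ((hasDerivAt_const x C).sub hg).div (hasDerivAt_id x) hx
  refine ⟨hderiv₂.differentiableAt.congr_of_eventuallyEq hderiv, ?_⟩
  rw [hderiv.deriv_eq, hderiv₂.deriv, hderiv.eq_of_nhds]
  field_simp
  ring

/-- the explicit radial stream function φ solves
-(φ'' + φ'/r) = ϖ on (r₁,r₂) with boundary values φ(r₁)=0, φ(r₂)=γ. -/
theorem stmt_6 (r₁ r₂ : ℝ) (hr₁ : 0 < r₁) (hr : r₁ < r₂)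
    (ϖ : ℝ → ℝ) (hϖ : ContinuousOn ϖ (Set.Icc r₁ r₂)) (γ : ℝ)
    (C : ℝ)
    (hC : C = (γ + ∫ s in r₁..r₂, (1 / s) * ∫ t in r₁..s, t * ϖ t) / Real.log (r₂ / r₁))
    (φ : ℝ → ℝ)
    (hφ : ∀ r : ℝ, φ r =
      C * Real.log (r / r₁) - ∫ s in r₁..r, (1 / s) * ∫ t in r₁..s, t * ϖ t) :
    φ r₁ = 0 ∧ φ r₂ = γ ∧
    ∀ r ∈ Set.Ioo r₁ r₂,
      DifferentiableAt ℝ φ r ∧ DifferentiableAt ℝ (deriv φ) r ∧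
      -(deriv (deriv φ) r + deriv φ r / r) = ϖ r := by
  have hlog : Real.log (r₂ / r₁) ≠ 0 := (Real.log_pos ((one_lt_div hr₁).2 hr)).ne'
  have hweight : ContinuousOn (fun t => t * ϖ t) (Icc r₁ r₂) := continuousOn_id.mul hϖ
  have hφ' : ∀ x ∈ Ioo r₁ r₂, HasDerivAt φ ((C - ∫ t in r₁..x, t * ϖ t) / x) x := by
    intro x hx
    rw [funext hφ]
    exact hasDerivAt_mul_log_sub_integral_inv_mul hr₁
      (continuousOn_integral_Icc hr.le hweight) hx
  refine ⟨by simp [hφ], by rw [hφ, hC]; field_simp; ring, fun r hr' => ?_⟩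
  exact ⟨(hφ' r hr').differentiableAt, neg_deriv_deriv_add_deriv_div_eq (hr₁.trans hr'.1).ne'
    (eventually_of_mem (isOpen_Ioo.mem_nhds hr') hφ')
    (hasDerivAt_integral_of_continuousOn_Icc hweight hr')⟩
end

section
/- For all reals A > 1 and B > 1, the function P(t) = sinh(t·log A) · sinh(t·log B) / ( t · sinh(t·log(A·B)) ) is strictly decreasing on (0, ∞). Consequently, for 0 < r₁ < R₂ < r₂ and positive integers n, m, one has p₂(n) = p₂(m) if and only if n = m, where p₂(t) = R₂² · sinh(t·log(R₂/r₁)) · sinh(t·log(r₂/R₂)) / ( t · sinh(t·log(r₂/r₁)) ). -/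
/-!
Since `sinh (x + y) / (sinh x * sinh y) = coth x + coth y`, the reciprocal of
`P t = sinh (t a) sinh (t b) / (t sinh (t (a + b)))` is `g (t a) / a + g (t b) / b` with
`g x = x coth x`. For `x > 0`, `g' x = (sinh x cosh x - x) / sinh² x > 0` because
`sinh (2x) > 2x`, so `1 / P` is positive and strictly increasing and `P` is strictly decreasing.
For the second claim, `p₂ = R₂² P` with `A = R₂ / r₁`, `B = r₂ / R₂`, `AB = r₂ / r₁`,
and a strictly monotone function is injective.
-/

open Real Set

theorem strictMonoOn_mul_cosh_div_sinh :
    StrictMonoOn (fun x : ℝ => x * cosh x / sinh x) (Ioi 0) := by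
  have hderiv : ∀ x : ℝ, 0 < x → HasDerivAt (fun x : ℝ => x * cosh x / sinh x)
      ((sinh x * cosh x - x) / sinh x ^ 2) x := by
    intro x hx
    refine (((hasDerivAt_id x).mul (hasDerivAt_cosh x)).div (hasDerivAt_sinh x)
      (sinh_pos_iff.mpr hx).ne').congr_deriv ?_
    simp only [Pi.mul_apply, id]
    linear_combination (-x / sinh x ^ 2) * cosh_sq_sub_sinh_sq x
  refine strictMonoOn_of_deriv_pos (convex_Ioi 0)
    (fun x hx => (hderiv x hx).continuousAt.continuousWithinAt) fun x hx => ?_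
  rw [interior_Ioi] at hx
  rw [(hderiv x hx).deriv]
  have : x < sinh x * cosh x := by
    have := self_lt_sinh_iff.mpr (mul_pos two_pos hx)
    rw [sinh_two_mul] at this
    linarith
  exact div_pos (by linarith) (pow_pos (sinh_pos_iff.mpr hx) 2)

theorem sinh_add_div_sinh_mul_sinh {x y : ℝ} (hx : x ≠ 0) (hy : y ≠ 0) :
    sinh (x + y) / (sinh x * sinh y) = cosh x / sinh x + cosh y / sinh y := by
  have := sinh_ne_zero.mpr hx
  have := sinh_ne_zero.mpr hy
  rw [sinh_add]
  field_simp
  ring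

theorem strictAntiOn_sinh_mul_sinh_div {a b : ℝ} (ha : 0 < a) (hb : 0 < b) :
    StrictAntiOn (fun t : ℝ => sinh (t * a) * sinh (t * b) / (t * sinh (t * (a + b))))
      (Ioi 0) := by
  set g : ℝ → ℝ := fun x => x * cosh x / sinh x
  have hrecip : ∀ t : ℝ, 0 < t → sinh (t * a) * sinh (t * b) / (t * sinh (t * (a + b))) =
      (g (t * a) / a + g (t * b) / b)⁻¹ := by
    intro t ht
    rw [← inv_div, mul_div_assoc, mul_add,
      sinh_add_div_sinh_mul_sinh (by positivity) (by positivity)]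
    simp only [g]
    field_simp
  intro s (hs : 0 < s) t (ht : 0 < t) hst
  have hg_lt : ∀ c : ℝ, 0 < c → g (s * c) / c < g (t * c) / c := fun c hc =>
    div_lt_div_of_pos_right
      (strictMonoOn_mul_cosh_div_sinh (mul_pos hs hc) (mul_pos ht hc) (by gcongr)) hc
  simp only [hrecip s hs, hrecip t ht]
  rw [inv_lt_inv₀ (by positivity) (by positivity)]
  exact add_lt_add (hg_lt a ha) (hg_lt b hb)

/-- for A, B > 1 the function
t ↦ sinh(t log A) sinh(t log B) / (t sinh(t log(AB))) is strictly decreasing on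
(0,∞); consequently p₂(n) = p₂(m) iff n = m for positive integers n, m. -/
theorem stmt_7 :
    (∀ A B : ℝ, 1 < A → 1 < B →
      StrictAntiOn (fun t : ℝ =>
        Real.sinh (t * Real.log A) * Real.sinh (t * Real.log B) /
          (t * Real.sinh (t * Real.log (A * B)))) (Set.Ioi (0:ℝ))) ∧
    (∀ r₁ R₂ r₂ : ℝ, 0 < r₁ → r₁ < R₂ → R₂ < r₂ →
      ∀ n m : ℕ, 0 < n → 0 < m →
        ((R₂^2 * Real.sinh ((n:ℝ) * Real.log (R₂ / r₁)) *
            Real.sinh ((n:ℝ) * Real.log (r₂ / R₂)) /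
            ((n:ℝ) * Real.sinh ((n:ℝ) * Real.log (r₂ / r₁)))
          = R₂^2 * Real.sinh ((m:ℝ) * Real.log (R₂ / r₁)) *
            Real.sinh ((m:ℝ) * Real.log (r₂ / R₂)) /
            ((m:ℝ) * Real.sinh ((m:ℝ) * Real.log (r₂ / r₁)))) ↔ n = m)) := by
  have hP : ∀ A B : ℝ, 1 < A → 1 < B →
      StrictAntiOn (fun t : ℝ => sinh (t * log A) * sinh (t * log B) /
        (t * sinh (t * log (A * B)))) (Ioi 0) := by
    intro A B hA hB
    rw [log_mul (by positivity) (by positivity)]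
    exact strictAntiOn_sinh_mul_sinh_div (log_pos hA) (log_pos hB)
  refine ⟨hP, fun r₁ R₂ r₂ hr₁ h₁ h₂ n m hn hm => ?_⟩
  have hR₂ : 0 < R₂ := hr₁.trans h₁
  have hratio : R₂ / r₁ * (r₂ / R₂) = r₂ / r₁ := by field_simp
  have hp₂ : ∀ t : ℝ, R₂ ^ 2 * sinh (t * log (R₂ / r₁)) * sinh (t * log (r₂ / R₂)) /
      (t * sinh (t * log (r₂ / r₁))) = R₂ ^ 2 * (sinh (t * log (R₂ / r₁)) *
        sinh (t * log (r₂ / R₂)) / (t * sinh (t * log (R₂ / r₁ * (r₂ / R₂))))) := by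
    intro t
    rw [hratio, mul_assoc, mul_div_assoc]
  rw [hp₂, hp₂, mul_right_inj' (by positivity),
    (hP _ _ ((one_lt_div hr₁).mpr h₁) ((one_lt_div hR₂).mpr h₂)).injOn.eq_iff
      (mem_Ioi.mpr (Nat.cast_pos.mpr hn)) (mem_Ioi.mpr (Nat.cast_pos.mpr hm)), Nat.cast_inj]
end

section
/- Let c > 0, λ* ∈ ℝ, p > 0, R ≠ 0 be reals, and let w : [−1,1] → ℝ be continuous with w(s) ≤ 0 for all s ∈ [−1,1] and ∫_{-1}^{1} w(s) ds < 0. For λ < λ* define I(λ) = p · ∫_{-1}^{1} w(s) / ( c·(s − 1) + (λ − λ*)·R² ) ds. Then: (i) c·(s−1) + (λ−λ*)·R² < 0 for all s ∈ [−1,1] and λ < λ*, and I(λ) > 0; (ii) I is continuous and strictly increasing on (−∞, λ*); (iii) I(λ) → 0 as λ → −∞; and (iv) if there exists λ₀ < λ* with I(λ₀) ≥ 1, then there exists a unique λ₁ < λ* with I(λ₁) = 1. -/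
open MeasureTheory intervalIntegral Set Filter Topology

/-- mechanism behind Lemma lema:lambda1: properties of
I(λ) = p ∫ w(s)/(c(s-1)+(λ-λ*)R²) ds for λ < λ*. -/
theorem stmt_13 (c lamStar p R : ℝ) (hc : 0 < c) (hp : 0 < p) (hR : R ≠ 0)
    (w : ℝ → ℝ) (hw : ContinuousOn w (Set.Icc (-1:ℝ) 1))
    (hwle : ∀ s ∈ Set.Icc (-1:ℝ) 1, w s ≤ 0)
    (hwint : (∫ s in (-1:ℝ)..1, w s) < 0)
    (I : ℝ → ℝ)
    (hI : ∀ lam : ℝ, lam < lamStar →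
      I lam = p * ∫ s in (-1:ℝ)..1, w s / (c * (s - 1) + (lam - lamStar) * R^2)) :
    (∀ s ∈ Set.Icc (-1:ℝ) 1, ∀ lam : ℝ, lam < lamStar →
        c * (s - 1) + (lam - lamStar) * R^2 < 0) ∧
    (∀ lam : ℝ, lam < lamStar → 0 < I lam) ∧
    ContinuousOn I (Set.Iio lamStar) ∧
    StrictMonoOn I (Set.Iio lamStar) ∧
    Filter.Tendsto I Filter.atBot (nhds 0) ∧
    ((∃ lam₀, lam₀ < lamStar ∧ 1 ≤ I lam₀) →
      ∃! lam₁ : ℝ, lam₁ < lamStar ∧ I lam₁ = 1) := by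
  have hR2 : 0 < R^2 := by positivity
  set D : ℝ → ℝ → ℝ := fun lam s => c * (s - 1) + (lam - lamStar) * R^2 with hDdef
  have hDneg : ∀ lam < lamStar, ∀ s ∈ Set.Icc (-1:ℝ) 1, D lam s < 0 := by
    intro lam hlam s hs
    have h1 : s - 1 ≤ 0 := by linarith [hs.2]
    have h2 : c * (s - 1) ≤ 0 := mul_nonpos_of_nonneg_of_nonpos hc.le h1
    have h3 : (lam - lamStar) * R^2 < 0 := mul_neg_of_neg_of_pos (by linarith) hR2
    simp only [hDdef]; linarith
  set M : ℝ → ℝ := fun lam => 2*c + (lamStar - lam) * R^2 with hMdef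
  have hMpos : ∀ lam < lamStar, 0 < M lam := by
    intro lam hlam
    have : 0 < (lamStar - lam) * R^2 := mul_pos (by linarith) hR2
    simp only [hMdef]; linarith
  have hDlb : ∀ lam, ∀ s ∈ Set.Icc (-1:ℝ) 1, -(M lam) ≤ D lam s := by
    intro lam s hs
    have h1 : (-1:ℝ) ≤ s := hs.1
    simp only [hMdef, hDdef]
    nlinarith
  -- continuity of integrand in s
  have hcontD : ∀ lam, Continuous (fun s => D lam s) := by
    intro lam; simp only [hDdef]; fun_prop
  have hcontF : ∀ lam < lamStar, ContinuousOn (fun s => w s / D lam s) (Set.Icc (-1:ℝ) 1) := by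
    intro lam hlam
    exact hw.div (hcontD lam).continuousOn (fun s hs => (hDneg lam hlam s hs).ne)
  have hii : ∀ lam < lamStar, IntervalIntegrable (fun s => w s / D lam s) volume (-1) 1 := by
    intro lam hlam
    exact ((hcontF lam hlam).mono (by rw [Set.uIcc_of_le (by norm_num)])).intervalIntegrable
  have hwii : IntervalIntegrable w volume (-1) 1 :=
    (hw.mono (by rw [Set.uIcc_of_le (by norm_num)])).intervalIntegrable
  -- pointwise lower bound
  have hpt : ∀ lam < lamStar, ∀ s ∈ Set.Icc (-1:ℝ) 1, (-(w s)) / M lam ≤ w s / D lam s := by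
    intro lam hlam s hs
    have hD := hDneg lam hlam s hs
    have h1 : -(w s) ≥ 0 := by linarith [hwle s hs]
    have h2 : -(D lam s) ≤ M lam := by linarith [hDlb lam s hs]
    have := div_le_div_of_nonneg_left h1 (by linarith : (0:ℝ) < -(D lam s)) h2
    rwa [neg_div_neg_eq] at this
  have hlbii : ∀ lam, IntervalIntegrable (fun s => (-(w s)) / M lam) volume (-1) 1 := by
    intro lam
    simpa [div_eq_mul_inv, mul_comm] using (hwii.neg.mul_const (M lam)⁻¹)
  have hIpos : ∀ lam < lamStar, 0 < ∫ s in (-1:ℝ)..1, w s / D lam s := by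
    intro lam hlam
    have hmono := intervalIntegral.integral_mono_on (by norm_num : (-1:ℝ) ≤ 1)
      (hlbii lam) (hii lam hlam) (hpt lam hlam)
    have heq : (∫ s in (-1:ℝ)..1, (-(w s)) / M lam) = (-(∫ s in (-1:ℝ)..1, w s)) / M lam := by
      rw [intervalIntegral.integral_div, intervalIntegral.integral_neg]
    have : 0 < (-(∫ s in (-1:ℝ)..1, w s)) / M lam :=
      div_pos (by linarith) (hMpos lam hlam)
    rw [heq] at hmono; linarith
  -- strict monotonicity of the integral
  have hstrict : ∀ lam mu, lam < mu → mu < lamStar →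
      (∫ s in (-1:ℝ)..1, w s / D lam s) < ∫ s in (-1:ℝ)..1, w s / D mu s := by
    intro lam mu hlm hmu
    have hlam : lam < lamStar := hlm.trans hmu
    set K : ℝ := (mu - lam) * R^2 / (M lam * M mu) with hKdef
    have hMM : 0 < M lam * M mu := mul_pos (hMpos lam hlam) (hMpos mu hmu)
    have hK : 0 < K := div_pos (mul_pos (by linarith) hR2) hMM
    have hptm : ∀ s ∈ Set.Icc (-1:ℝ) 1,
        w s / D lam s + K * (-(w s)) ≤ w s / D mu s := by
      intro s hs
      have hDl := hDneg lam hlam s hs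
      have hDm := hDneg mu hmu s hs
      have hwn : 0 ≤ -(w s) := by linarith [hwle s hs]
      have hprod : 0 < D lam s * D mu s := mul_pos_of_neg_of_neg hDl hDm
      have hprodle : D lam s * D mu s ≤ M lam * M mu := by
        have h2 : -(D lam s) ≤ M lam := by linarith [hDlb lam s hs]
        have h3 : -(D mu s) ≤ M mu := by linarith [hDlb mu s hs]
        nlinarith
      have hnum : 0 ≤ (-(w s)) * ((mu - lam) * R^2) :=
        mul_nonneg hwn (mul_nonneg (by linarith) hR2.le)
      have heq : w s / D mu s - w s / D lam s
          = ((-(w s)) * ((mu - lam) * R^2)) / (D lam s * D mu s) := by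
        rw [div_sub_div _ _ hDm.ne hDl.ne, mul_comm (D mu s) (D lam s)]
        congr 1
        simp only [hDdef]
        ring
      have hdiv := div_le_div_of_nonneg_left hnum hprod hprodle
      have hKeq : K * (-(w s)) = ((-(w s)) * ((mu - lam) * R^2)) / (M lam * M mu) := by
        rw [hKdef, div_mul_eq_mul_div, mul_comm ((mu - lam) * R^2) (-(w s))]
      rw [hKeq]
      linarith
    have hgii : IntervalIntegrable (fun s => K * (-(w s))) volume (-1) 1 := by
      simpa using hwii.neg.const_mul K
    have hlhs_ii : IntervalIntegrable (fun s => w s / D lam s + K * (-(w s))) volume (-1) 1 :=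
      (hii lam hlam).add hgii
    have hmono := intervalIntegral.integral_mono_on (by norm_num : (-1:ℝ) ≤ 1)
      hlhs_ii (hii mu hmu) hptm
    have heq2 : (∫ s in (-1:ℝ)..1, (w s / D lam s + K * (-(w s))))
        = (∫ s in (-1:ℝ)..1, w s / D lam s) + K * (-(∫ s in (-1:ℝ)..1, w s)) := by
      rw [intervalIntegral.integral_add (hii lam hlam) hgii,
        intervalIntegral.integral_const_mul, intervalIntegral.integral_neg]
    rw [heq2] at hmono
    have : 0 < K * (-(∫ s in (-1:ℝ)..1, w s)) := mul_pos hK (by linarith)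
    linarith
  have hIoc : Set.uIoc (-1:ℝ) 1 = Set.Ioc (-1:ℝ) 1 := Set.uIoc_of_le (by norm_num)
  have habsii : IntervalIntegrable (fun t => |w t|) volume (-1) 1 := hwii.abs
  -- continuity of the parametric integral
  have hJ : ∀ lam₀ ∈ Set.Iio lamStar,
      ContinuousWithinAt (fun lam => ∫ s in (-1:ℝ)..1, w s / D lam s)
        (Set.Iio lamStar) lam₀ := by
    intro lam₀ hlam₀
    have hlam₀' : lam₀ < lamStar := hlam₀
    set mid := (lam₀ + lamStar) / 2 with hmiddef
    have hmid1 : lam₀ < mid := by simp only [hmiddef]; linarith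
    have hmid2 : mid < lamStar := by simp only [hmiddef]; linarith
    set m : ℝ := (lamStar - mid) * R^2 with hmdef
    have hm : 0 < m := mul_pos (by linarith) hR2
    apply intervalIntegral.continuousWithinAt_of_dominated_interval
      (bound := fun t => |w t| / m)
    · filter_upwards [self_mem_nhdsWithin] with lam hlam
      rw [hIoc]
      exact ((hcontF lam hlam).mono Set.Ioc_subset_Icc_self).aestronglyMeasurable
        measurableSet_Ioc
    · filter_upwards [mem_nhdsWithin_of_mem_nhds (Iio_mem_nhds hmid1)] with lam hlam
      refine Filter.Eventually.of_forall fun t ht => ?_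
      rw [hIoc] at ht
      have ht' : t ∈ Set.Icc (-1:ℝ) 1 := Set.Ioc_subset_Icc_self ht
      have hD : D lam t < 0 := hDneg lam (lt_trans hlam hmid2) t ht'
      have hmle : m ≤ |D lam t| := by
        rw [abs_of_neg hD]
        have h1 : c * (t - 1) ≤ 0 :=
          mul_nonpos_of_nonneg_of_nonpos hc.le (by linarith [ht'.2])
        have h2 : (lamStar - mid) * R^2 ≤ (lamStar - lam) * R^2 :=
          mul_le_mul_of_nonneg_right (by have : lam < mid := hlam; linarith) hR2.le
        simp only [hmdef, hDdef]
        nlinarith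
      rw [Real.norm_eq_abs, abs_div]
      exact div_le_div_of_nonneg_left (abs_nonneg _) hm hmle
    · exact habsii.div_const m
    · refine Filter.Eventually.of_forall fun t ht => ?_
      rw [hIoc] at ht
      have ht' : t ∈ Set.Icc (-1:ℝ) 1 := Set.Ioc_subset_Icc_self ht
      have hc1 : ContinuousAt (fun lam => D lam t) lam₀ := by
        simp only [hDdef]; fun_prop
      exact (continuousAt_const.div hc1
        (hDneg lam₀ hlam₀' t ht').ne).continuousWithinAt
  have hIcont : ContinuousOn I (Set.Iio lamStar) := by
    intro lam₀ hlam₀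
    exact (continuousWithinAt_const.mul (hJ lam₀ hlam₀)).congr
      (fun y hy => hI y hy) (hI lam₀ hlam₀)
  have hImono : StrictMonoOn I (Set.Iio lamStar) := by
    intro a ha b hb hab
    rw [hI a ha, hI b hb]
    exact mul_lt_mul_of_pos_left (hstrict a b hab hb) hp
  -- tendsto 0 at -infinity
  have hJ0 : Tendsto (fun lam => ∫ s in (-1:ℝ)..1, w s / D lam s) atBot (𝓝 0) := by
    have h0 : (0:ℝ) = ∫ s in (-1:ℝ)..1, (0:ℝ) := by simp
    rw [h0]
    apply intervalIntegral.tendsto_integral_filter_of_dominated_convergence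
      (bound := fun t => |w t| / R^2)
    · filter_upwards [Iio_mem_atBot lamStar] with lam hlam
      rw [hIoc]
      exact ((hcontF lam hlam).mono Set.Ioc_subset_Icc_self).aestronglyMeasurable
        measurableSet_Ioc
    · filter_upwards [Iic_mem_atBot (lamStar - 1)] with lam hlam
      refine Filter.Eventually.of_forall fun t ht => ?_
      rw [hIoc] at ht
      have ht' : t ∈ Set.Icc (-1:ℝ) 1 := Set.Ioc_subset_Icc_self ht
      have hlam' : lam ≤ lamStar - 1 := hlam
      have hD : D lam t < 0 := hDneg lam (by linarith) t ht'
      have hmle : R^2 ≤ |D lam t| := by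
        rw [abs_of_neg hD]
        have h1 : c * (t - 1) ≤ 0 :=
          mul_nonpos_of_nonneg_of_nonpos hc.le (by linarith [ht'.2])
        have h2 : 1 * R^2 ≤ (lamStar - lam) * R^2 :=
          mul_le_mul_of_nonneg_right (by linarith) hR2.le
        simp only [hDdef]
        nlinarith
      rw [Real.norm_eq_abs, abs_div]
      exact div_le_div_of_nonneg_left (abs_nonneg _) hR2 hmle
    · exact habsii.div_const _
    · refine Filter.Eventually.of_forall fun t _ => ?_
      have hnegD : Tendsto (fun lam => -(D lam t)) atBot atTop := by
        simp only [hDdef, neg_add, ← sub_eq_add_neg]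
        have h1 : Tendsto (fun lam : ℝ => (lamStar - lam) * R^2) atBot atTop := by
          apply Tendsto.atTop_mul_const hR2
          exact tendsto_atTop_add_const_left _ _ tendsto_neg_atBot_atTop
        have := tendsto_atTop_add_const_left _ (-(c * (t - 1))) h1
        refine this.congr fun lam => by ring
      have h2 : Tendsto (fun lam : ℝ => w t / (-(D lam t))) atBot (𝓝 (0:ℝ)) :=
        Tendsto.div_atTop tendsto_const_nhds hnegD
      have h3 := h2.neg
      rw [neg_zero] at h3
      refine h3.congr fun lam => ?_
      rw [div_neg, neg_neg]
  have hItend : Tendsto I atBot (𝓝 (0:ℝ)) := by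
    have heq : (fun lam => p * ∫ s in (-1:ℝ)..1, w s / D lam s) =ᶠ[atBot] I :=
      Filter.eventually_of_mem (Iio_mem_atBot lamStar) fun lam hlam => (hI lam hlam).symm
    have := tendsto_const_nhds (x := p) (f := (atBot : Filter ℝ)) |>.mul hJ0
    rw [mul_zero] at this
    exact this.congr' heq
  -- existence and uniqueness of lam₁
  have hexu : (∃ lam₀, lam₀ < lamStar ∧ 1 ≤ I lam₀) →
      ∃! lam₁ : ℝ, lam₁ < lamStar ∧ I lam₁ = 1 := by
    rintro ⟨lam₀, hlam₀, hIlam₀⟩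
    obtain ⟨a, ha⟩ := Filter.eventually_atBot.mp
      (hItend.eventually_lt_const (by norm_num : (0:ℝ) < 1))
    set lamm := min a (lam₀ - 1) with hlammdef
    have h1 : lamm < lam₀ := lt_of_le_of_lt (min_le_right _ _) (by linarith)
    have h2 : I lamm < 1 := ha lamm (min_le_left _ _)
    have hccIcc : ContinuousOn I (Set.Icc lamm lam₀) :=
      hIcont.mono fun x hx => lt_of_le_of_lt hx.2 hlam₀
    have hmem : (1:ℝ) ∈ Set.Icc (I lamm) (I lam₀) := ⟨h2.le, hIlam₀⟩
    obtain ⟨lam₁, hlam₁mem, hlam₁⟩ := intermediate_value_Icc h1.le hccIcc hmem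
    have hlt : lam₁ < lamStar := lt_of_le_of_lt hlam₁mem.2 hlam₀
    refine ⟨lam₁, ⟨hlt, hlam₁⟩, ?_⟩
    rintro y ⟨hy, hyval⟩
    exact hImono.injOn hy hlt (by rw [hyval, hlam₁])
  refine ⟨fun s hs lam hlam => hDneg lam hlam s hs, fun lam hlam => ?_,
    hIcont, hImono, hItend, hexu⟩
  rw [hI lam hlam]
  exact mul_pos hp (hIpos lam hlam)
end
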